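/- arXiv:2104.03961 — 2 statements merged into one kernel-verified Lean document; each statement's English description precedes it below -/
import Mathlib

section
/- Let σ > 0, let ν be a probability measure on a measurable parameter space Γ, and let γ ↦ s_γ be a measurable map from Γ to ℝⁿ such that for every x ∈ ℝⁿ the function γ ↦ exp((⟪x, s_γ⟫ − ‖s_γ‖²/2)/σ²) is ν-integrable. Define the likelihood ratio λ(x) = ∫ exp((⟪x, s_γ⟫ − ‖s_γ‖²/2)/σ²) dν(γ). Then λ is a convex function on ℝⁿ, and consequently for every τ ∈ ℝ the sublevel set {x ∈ ℝⁿ : λ(x) ≤ τ} is a convex subset of ℝⁿ. (This is the paper's Proposition 1: under Gaussian noise N(0, σ²I), the Neyman–Pearson optimal decision region for 'noise only' is convex.) -/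
open MeasureTheory Real Set

theorem convexOn_integral {E Γ : Type*} [AddCommGroup E] [Module ℝ E] [MeasurableSpace Γ]
    {μ : Measure Γ} {s : Set E} {f : E → Γ → ℝ} (hs : Convex ℝ s)
    (hf : ∀ᵐ γ ∂μ, ConvexOn ℝ s (f · γ)) (hint : ∀ x ∈ s, Integrable (f x) μ) :
    ConvexOn ℝ s fun x => ∫ γ, f x γ ∂μ := by
  refine ⟨hs, fun x hx y hy a b ha hb hab => ?_⟩
  have hx' := (hint x hx).const_mul a
  have hy' := (hint y hy).const_mul b
  calc ∫ γ, f (a • x + b • y) γ ∂μ ≤ ∫ γ, (a * f x γ + b * f y γ) ∂μ :=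
        integral_mono_ae (hint _ (hs hx hy ha hb hab)) (hx'.add hy')
          (hf.mono fun γ hγ => hγ.2 hx hy ha hb hab)
    _ = a • ∫ γ, f x γ ∂μ + b • ∫ γ, f y γ ∂μ := by
        rw [integral_add hx' hy', integral_const_mul, integral_const_mul, smul_eq_mul, smul_eq_mul]

theorem convexOn_exp_inner_sub_div {E : Type*} [NormedAddCommGroup E] [InnerProductSpace ℝ E]
    (v : E) (c d : ℝ) : ConvexOn ℝ univ fun x => exp ((inner ℝ x v - c) / d) := by
  let g : E →ᵃ[ℝ] ℝ := d⁻¹ • ((innerₛₗ ℝ v).toAffineMap - AffineMap.const ℝ E c)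
  have hg : ∀ x, g x = (inner ℝ x v - c) / d := fun x => by
    simp [g, real_inner_comm, div_eq_inv_mul]
  simpa [hg, Function.comp_def] using convexOn_exp.comp_affineMap g

theorem matched_filter_optimal_region_convex_general
    {n : ℕ} {Γ : Type*} [MeasurableSpace Γ]
    (ν : Measure Γ)
    (s : Γ → EuclideanSpace ℝ (Fin n))
    (σ : ℝ)
    (hint : ∀ x : EuclideanSpace ℝ (Fin n),
      Integrable (fun γ => Real.exp (((inner ℝ x (s γ) : ℝ) - ‖s γ‖ ^ 2 / 2) / σ ^ 2)) ν)
    (lam : EuclideanSpace ℝ (Fin n) → ℝ)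
    (hlam : ∀ x, lam x = ∫ γ, Real.exp (((inner ℝ x (s γ) : ℝ) - ‖s γ‖ ^ 2 / 2) / σ ^ 2) ∂ν) :
    ConvexOn ℝ Set.univ lam ∧ ∀ τ : ℝ, Convex ℝ {x | lam x ≤ τ} := by
  have hconv : ConvexOn ℝ univ lam := by
    rw [funext hlam]
    exact convexOn_integral convex_univ
      (ae_of_all _ fun γ => convexOn_exp_inner_sub_div (s γ) _ _) fun x _ => hint x
  exact ⟨hconv, fun τ => by simpa using hconv.convex_le τ⟩

/-- **Proposition 1 (convexity of the optimal decision region).**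
Let `σ > 0`, `ν` a probability measure on a measurable parameter space `Γ`, and
`γ ↦ s γ` a measurable map into `ℝⁿ` such that for every `x` the integrand
`γ ↦ exp((⟪x, s γ⟫ − ‖s γ‖²/2)/σ²)` is `ν`-integrable.  Then the likelihood
ratio `lam x = ∫ exp((⟪x, s γ⟫ − ‖s γ‖²/2)/σ²) dν(γ)` is a convex function on `ℝⁿ`,
and for every threshold `τ` the sublevel set `{x | lam x ≤ τ}` is convex. -/
theorem matched_filter_optimal_region_convex
    {n : ℕ} {Γ : Type*} [MeasurableSpace Γ]
    (ν : Measure Γ) [IsProbabilityMeasure ν]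
    (s : Γ → EuclideanSpace ℝ (Fin n)) (hs : Measurable s)
    (σ : ℝ) (hσ : 0 < σ)
    (hint : ∀ x : EuclideanSpace ℝ (Fin n),
      Integrable (fun γ => Real.exp (((inner ℝ x (s γ) : ℝ) - ‖s γ‖ ^ 2 / 2) / σ ^ 2)) ν)
    (lam : EuclideanSpace ℝ (Fin n) → ℝ)
    (hlam : ∀ x, lam x = ∫ γ, Real.exp (((inner ℝ x (s γ) : ℝ) - ‖s γ‖ ^ 2 / 2) / σ ^ 2) ∂ν) :
    ConvexOn ℝ Set.univ lam ∧ ∀ τ : ℝ, Convex ℝ {x | lam x ≤ τ} :=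
  matched_filter_optimal_region_convex_general ν s σ hint lam hlam
end

section
/- Let ℓ : ℝ × {0,1} → ℝ be a loss function such that for each y ∈ {0,1}, the map ŷ ↦ ℓ(ŷ, y) is differentiable and strictly convex on ℝ and attains its minimum at ŷ = y. For t > 0 let m(t) denote the unique global minimizer of h_t(ŷ) = ℓ(ŷ, 0) + t · ℓ(ŷ, 1). Then m : (0, ∞) → (0, 1) is a strictly increasing function of t. -/
/-- Let `ℓ(·, y)` be differentiable and strictly convex with minimum at `ŷ = y`,
for each label `y ∈ {0,1}`.  For `t > 0` let `m t ∈ (0,1)` be the (unique) global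
minimizer of `h_t(ŷ) = ℓ(ŷ, 0) + t·ℓ(ŷ, 1)`.  Then `m` is strictly increasing on
`(0, ∞)`. -/
theorem risk_minimizer_strictMono_in_likelihood_ratio
    (ℓ : ℝ → ℝ → ℝ)
    (hdiff : ∀ y ∈ ({0, 1} : Set ℝ), Differentiable ℝ (fun yhat => ℓ yhat y))
    (hconv : ∀ y ∈ ({0, 1} : Set ℝ), StrictConvexOn ℝ Set.univ (fun yhat => ℓ yhat y))
    (hmin : ∀ y ∈ ({0, 1} : Set ℝ), ∀ yhat : ℝ, ℓ y y ≤ ℓ yhat y)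
    (m : ℝ → ℝ)
    (hm : ∀ t : ℝ, 0 < t → m t ∈ Set.Ioo (0 : ℝ) 1 ∧
          ∀ yhat : ℝ, ℓ (m t) 0 + t * ℓ (m t) 1 ≤ ℓ yhat 0 + t * ℓ yhat 1) :
    StrictMonoOn m (Set.Ioi (0 : ℝ)) := by
  have h0 : (0 : ℝ) ∈ ({0, 1} : Set ℝ) := by left; rfl
  have h1 : (1 : ℝ) ∈ ({0, 1} : Set ℝ) := by right; rfl
  set L0 : ℝ → ℝ := fun y => ℓ y 0 with hL0
  set L1 : ℝ → ℝ := fun y => ℓ y 1 with hL1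
  have hd0 := hdiff 0 h0
  have hd1 := hdiff 1 h1
  -- strict monotonicity of derivatives
  have hD0 : StrictMono (deriv L0) := by
    have := (hconv 0 h0).strictMonoOn_deriv (fun x _ => (hd0 x))
    intro a b hab
    exact this (Set.mem_univ a) (Set.mem_univ b) hab
  have hD1 : StrictMono (deriv L1) := by
    have := (hconv 1 h1).strictMonoOn_deriv (fun x _ => (hd1 x))
    intro a b hab
    exact this (Set.mem_univ a) (Set.mem_univ b) hab
  -- derivatives vanish at the minima
  have hD0zero : deriv L0 0 = 0 := by
    have : IsLocalMin L0 0 := by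
      apply IsMinOn.isLocalMin _ (Filter.univ_mem)
      intro x _
      exact hmin 0 h0 x
    exact this.deriv_eq_zero
  have hD1zero : deriv L1 1 = 0 := by
    have : IsLocalMin L1 1 := by
      apply IsMinOn.isLocalMin _ (Filter.univ_mem)
      intro x _
      exact hmin 1 h1 x
    exact this.deriv_eq_zero
  -- first-order condition at m t
  have hFOC : ∀ t : ℝ, 0 < t → deriv L0 (m t) + t * deriv L1 (m t) = 0 := by
    intro t ht
    have hmt := (hm t ht).2
    have hloc : IsLocalMin (fun y => L0 y + t * L1 y) (m t) := by
      apply IsMinOn.isLocalMin _ (Filter.univ_mem)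
      intro x _
      exact hmt x
    have hder : deriv (fun y => L0 y + t * L1 y) (m t)
        = deriv L0 (m t) + t * deriv L1 (m t) := by
      have H : HasDerivAt (fun y => L0 y + t * L1 y)
          (deriv L0 (m t) + t * deriv L1 (m t)) (m t) :=
        ((hd0 (m t)).hasDerivAt).add (((hd1 (m t)).hasDerivAt).const_mul t)
      exact H.deriv
    rw [← hder]
    exact hloc.deriv_eq_zero
  -- sign information
  have hsign : ∀ t : ℝ, 0 < t → 0 < deriv L0 (m t) ∧ deriv L1 (m t) < 0 := by
    intro t ht
    obtain ⟨hmt0, hmt1⟩ := (hm t ht).1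
    constructor
    · have := hD0 hmt0
      rwa [hD0zero] at this
    · have := hD1 hmt1
      rwa [hD1zero] at this
  -- main argument
  intro s hs t ht hst
  by_contra hle
  push_neg at hle
  -- hle : m t ≤ m s
  have hs' : (0:ℝ) < s := hs
  have ht' : (0:ℝ) < t := ht
  obtain ⟨hD0s, hD1s⟩ := hsign s hs'
  obtain ⟨hD0t, hD1t⟩ := hsign t ht'
  have h1le : deriv L1 (m t) ≤ deriv L1 (m s) := by
    rcases eq_or_lt_of_le hle with h | h
    · rw [h]
    · exact (hD1 h).le
  have h0le : deriv L0 (m t) ≤ deriv L0 (m s) := by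
    rcases eq_or_lt_of_le hle with h | h
    · rw [h]
    · exact (hD0 h).le
  have es := hFOC s hs'
  have et := hFOC t ht'
  -- s * (-D1 (m s)) = D0 (m s) ≥ D0 (m t) = t * (-D1 (m t)) ≥ t * (-D1 (m s))
  have key : s * (-deriv L1 (m s)) ≥ t * (-deriv L1 (m s)) := by
    have e1 : s * (-deriv L1 (m s)) = deriv L0 (m s) := by linarith
    have e2 : t * (-deriv L1 (m t)) = deriv L0 (m t) := by linarith
    have h3 : t * (-deriv L1 (m t)) ≥ t * (-deriv L1 (m s)) := by
      apply mul_le_mul_of_nonneg_left (by linarith) (le_of_lt ht')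
    linarith
  have hpos : 0 < -deriv L1 (m s) := by linarith
  nlinarith
end
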